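/- Let u ∈ D′_per(Y×𝒯) be a periodic distribution and assume that u is continuous on D_ρ(Y_m) ⊗ D_per(𝒯) endowed with the L²_per(𝒯;H¹_ρ(Y_m))-norm. Then u ∈ L²_per(𝒯;(H¹_ρ(Y_m))′), and ⟨u,φ⟩ = ∫_0^1 (u(τ), φ(·,τ)) dτ for all φ ∈ D_ρ(Y_m) ⊗ D_per(𝒯), where ⟨·,·⟩ is the duality pairing between D′_per(Y×𝒯) and D_per(Y×𝒯) and the right-hand side is the duality product between L²_per(𝒯;(H¹_ρ(Y_m))′) and L²_per(𝒯;H¹_ρ(Y_m)). -/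

import Mathlib

noncomputable section

open MeasureTheory Filter Topology Set Pointwise

/-- Euclidean space ℝ^N. -/
abbrev E (N : ℕ) := EuclideanSpace ℝ (Fin N)

/-- The vector of ℝ^N with the given integer coordinates. -/
def intVec {N : ℕ} (k : Fin N → ℤ) : E N := WithLp.toLp 2 (fun i => (k i : ℝ))

/-- Periodicity with respect to the unit cell Y = (0,1)^N. -/
def YPer {N : ℕ} {α : Type*} (f : E N → α) : Prop :=
  ∀ (y : E N) (k : Fin N → ℤ), f (y + intVec k) = f y

/-- 1-periodicity in a real variable. -/
def TPer {α : Type*} (f : ℝ → α) : Prop := ∀ (τ : ℝ) (m : ℤ), f (τ + (m : ℝ)) = f τ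

/-- The open unit cell Y = Z = (0,1)^N. -/
def cell (N : ℕ) : Set (E N) := {y | ∀ i, y i ∈ Ioo (0:ℝ) 1}

/-- The i-th partial derivative of a function on ℝ^N. -/
def pd {N : ℕ} (i : Fin N) (f : E N → ℝ) (x : E N) : ℝ :=
  fderiv ℝ f x (EuclideanSpace.single i 1)

/-- Dot product of coordinate vectors. -/
def dot {N : ℕ} (v w : Fin N → ℝ) : ℝ := ∑ i, v i * w i

/-- Membership in L²(Ω × (0,T)). -/
def L2ΩT {N : ℕ} (Ω : Set (E N)) (T : ℝ) (f : E N → ℝ → ℝ) : Prop :=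
  MemLp (fun p : E N × ℝ => f p.1 p.2) 2
    ((volume.restrict Ω).prod (volume.restrict (Ioo 0 T)))

/-- Test functions of class L²(Ω_T; C_per(Y×Z×𝒯)). -/
def MSTest {N : ℕ} (Ω : Set (E N)) (T : ℝ) (φ : E N → ℝ → E N → E N → ℝ → ℝ) : Prop :=
  Measurable (fun p : (E N × ℝ) × E N × E N × ℝ => φ p.1.1 p.1.2 p.2.1 p.2.2.1 p.2.2.2) ∧
  (∀ x t, Continuous (fun p : E N × E N × ℝ => φ x t p.1 p.2.1 p.2.2)) ∧
  (∀ x t z τ, YPer (fun y => φ x t y z τ)) ∧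
  (∀ x t y τ, YPer (fun z => φ x t y z τ)) ∧
  (∀ x t y z, TPer (fun τ => φ x t y z τ)) ∧
  (∃ M : E N → ℝ → ℝ,
    MemLp (fun p : E N × ℝ => M p.1 p.2) 2
      ((volume.restrict Ω).prod (volume.restrict (Ioo 0 T))) ∧
    ∀ x t y z τ, |φ x t y z τ| ≤ M x t)

/-- Weak multi-scale convergence in L²(Ω_T) (the same integral condition defines
weak multi-scale convergence in L¹(Ω_T)). -/
def WeakMS {N : ℕ} (Ω : Set (E N)) (T : ℝ) (ε : ℕ → ℝ) (u : ℕ → E N → ℝ → ℝ)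
    (u₀ : E N → ℝ → E N → E N → ℝ → ℝ) : Prop :=
  ∀ φ, MSTest Ω T φ →
    Tendsto (fun n => ∫ x in Ω, ∫ t in Ioo 0 T,
        u n x t * φ x t ((ε n)⁻¹ • x) (((ε n) ^ 2)⁻¹ • x) (t / (ε n) ^ 2)) atTop
      (𝓝 (∫ x in Ω, ∫ t in Ioo 0 T, ∫ y in cell N, ∫ z in cell N, ∫ τ in Ioo (0:ℝ) 1,
        u₀ x t y z τ * φ x t y z τ))

/-- Strong multi-scale convergence in L²(Ω_T). -/
def StrongMS {N : ℕ} (Ω : Set (E N)) (T : ℝ) (ε : ℕ → ℝ) (u : ℕ → E N → ℝ → ℝ)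
    (u₀ : E N → ℝ → E N → E N → ℝ → ℝ) : Prop :=
  WeakMS Ω T ε u u₀ ∧
  Tendsto (fun n => ∫ x in Ω, ∫ t in Ioo 0 T, (u n x t) ^ 2) atTop
    (𝓝 (∫ x in Ω, ∫ t in Ioo 0 T, ∫ y in cell N, ∫ z in cell N, ∫ τ in Ioo (0:ℝ) 1,
      (u₀ x t y z τ) ^ 2))

/-- Smooth (Y×𝒯)-periodic functions, i.e. elements of C^∞_per(Y×𝒯),
representing test functions for periodic distributions. -/
def SmoothPerYT {N : ℕ} (φ : E N → ℝ → ℝ) : Prop :=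
  ContDiff ℝ (⊤ : ℕ∞) (fun p : E N × ℝ => φ p.1 p.2) ∧
  (∀ τ, YPer (fun y => φ y τ)) ∧ (∀ y, TPer (fun τ => φ y τ))

/-- a ∈ D_ρ(Y_m): smooth Y-periodic with ∫_{Y_m} ρ a dy = 0. -/
def MemDρ {N : ℕ} (Ym : Set (E N)) (ρ : E N → ℝ) (a : E N → ℝ) : Prop :=
  ContDiff ℝ (⊤ : ℕ∞) a ∧ YPer a ∧ (∫ y in Ym, ρ y * a y) = 0

/-- The H¹-norm over the unit cell of a (smooth periodic) function. -/
def H1n {N : ℕ} (v : E N → ℝ) : ℝ :=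
  Real.sqrt (∫ y in cell N, ((v y) ^ 2 + ∑ i, (pd i v y) ^ 2))


section AuxStuff

open RealInnerProductSpace ENNReal

set_option synthInstance.maxHeartbeats 1000000
set_option maxHeartbeats 2000000

instance piLpCompleteSpace (p : ℝ≥0∞) {ι : Type*} [Fintype ι] (β : ι → Type*)
    [∀ i, UniformSpace (β i)] [∀ i, CompleteSpace (β i)] : CompleteSpace (PiLp p β) :=
  inferInstance

variable {N : ℕ}

/-! ### The unit cell -/

lemma cell_isOpen (N : ℕ) : IsOpen (cell N) := by
  have h : cell N = ⋂ i, (EuclideanSpace.proj (𝕜 := ℝ) (i : Fin N)) ⁻¹' (Ioo (0:ℝ) 1) := by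
    ext y; simp [cell, Set.mem_iInter]
  rw [h]
  exact isOpen_iInter_of_finite fun i => isOpen_Ioo.preimage (EuclideanSpace.proj i).continuous

def Kbox (N : ℕ) : Set (E N) := {y | ∀ i, y i ∈ Icc (0:ℝ) 1}

lemma cell_subset_Kbox : cell N ⊆ Kbox N := fun y hy i => ⟨(hy i).1.le, (hy i).2.le⟩

lemma Kbox_isCompact (N : ℕ) : IsCompact (Kbox N) := by
  apply Metric.isCompact_of_isClosed_isBounded
  · have h : Kbox N = ⋂ i, (EuclideanSpace.proj (𝕜 := ℝ) (i : Fin N)) ⁻¹' (Icc (0:ℝ) 1) := by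
      ext y; simp [Kbox, Set.mem_iInter]
    rw [h]
    exact isClosed_iInter fun i => isClosed_Icc.preimage (EuclideanSpace.proj i).continuous
  · rw [Metric.isBounded_iff_subset_closedBall (0 : E N)]
    refine ⟨Real.sqrt N, fun y hy => ?_⟩
    rw [Metric.mem_closedBall, dist_zero_right, EuclideanSpace.norm_eq]
    apply Real.sqrt_le_sqrt
    calc ∑ i, ‖y i‖ ^ 2 ≤ ∑ _i : Fin N, (1:ℝ) := by
          refine Finset.sum_le_sum fun i _ => ?_
          have h1 : |y i| ≤ 1 := abs_le.mpr ⟨by linarith [(hy i).1], (hy i).2⟩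
          calc ‖y i‖ ^ 2 = |y i| ^ 2 := by rw [Real.norm_eq_abs]
            _ ≤ 1 := by nlinarith [abs_nonneg (y i)]
      _ = (N:ℝ) := by simp
      _ ≤ _ := le_refl _

/-! ### Measures -/

abbrev muY (N : ℕ) : Measure (E N) := volume.restrict (cell N)

abbrev muT : Measure ℝ := volume.restrict (Ioo (0:ℝ) 1)

instance muY_finite (N : ℕ) : IsFiniteMeasure (muY N) :=
  ⟨by rw [Measure.restrict_apply_univ]
      exact lt_of_le_of_lt (measure_mono cell_subset_Kbox) (Kbox_isCompact N).measure_lt_top⟩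

instance muT_finite : IsFiniteMeasure muT :=
  ⟨by rw [Measure.restrict_apply_univ]; exact measure_Ioo_lt_top⟩

lemma memL2_cell {X : Type*} [NormedAddCommGroup X] {f : E N → X} (hf : Continuous f) :
    MemLp f 2 (muY N) := by
  obtain ⟨C, hC⟩ := (Kbox_isCompact N).exists_bound_of_continuousOn hf.continuousOn
  exact MemLp.of_bound hf.aestronglyMeasurable C
    ((ae_restrict_iff' (cell_isOpen N).measurableSet).mpr
      (ae_of_all _ fun y hy => hC y (cell_subset_Kbox hy)))

lemma memL2_Ioo {X : Type*} [NormedAddCommGroup X] {f : ℝ → X} (hf : Continuous f) :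
    MemLp f 2 muT := by
  obtain ⟨C, hC⟩ := (isCompact_Icc (a := (0:ℝ)) (b := 1)).exists_bound_of_continuousOn
    hf.continuousOn
  exact MemLp.of_bound hf.aestronglyMeasurable C
    ((ae_restrict_iff' measurableSet_Ioo).mpr
      (ae_of_all _ fun y hy => hC y (Ioo_subset_Icc_self hy)))

lemma integrable_cell {f : E N → ℝ} (hf : Continuous f) : Integrable f (muY N) :=
  (memL2_cell hf).integrable (by norm_num)

/-! ### Partial derivatives -/

lemma pd_continuous {f : E N → ℝ} (hf : ContDiff ℝ (⊤ : ℕ∞) f) (i : Fin N) : Continuous (pd i f) := by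
  have h1 : Continuous (fderiv ℝ f) := hf.continuous_fderiv (by simp)
  exact (ContinuousLinearMap.apply ℝ ℝ (EuclideanSpace.single i (1:ℝ))).continuous.comp h1

lemma pd_add {f g : E N → ℝ} (hf : ContDiff ℝ (⊤ : ℕ∞) f) (hg : ContDiff ℝ (⊤ : ℕ∞) g) (i : Fin N) (x : E N) :
    pd i (fun y => f y + g y) x = pd i f x + pd i g x := by
  unfold pd
  rw [fderiv_fun_add ((hf.differentiable (by simp)) x) ((hg.differentiable (by simp)) x)]
  rfl

lemma pd_const_mul {f : E N → ℝ} (hf : ContDiff ℝ (⊤ : ℕ∞) f) (c : ℝ) (i : Fin N) (x : E N) :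
    pd i (fun y => c * f y) x = c * pd i f x := by
  unfold pd
  rw [fderiv_const_mul ((hf.differentiable (by simp)) x) c]
  rfl

lemma pd_mul_const {f : E N → ℝ} (hf : ContDiff ℝ (⊤ : ℕ∞) f) (c : ℝ) (i : Fin N) (x : E N) :
    pd i (fun y => f y * c) x = pd i f x * c := by
  have h : (fun y => f y * c) = fun y => c * f y := by funext y; ring
  rw [h, pd_const_mul hf c i x]; ring

end AuxStuff

section AuxStuff2

open RealInnerProductSpace ENNReal

set_option synthInstance.maxHeartbeats 1000000
set_option maxHeartbeats 2000000

variable {N : ℕ}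

lemma pd_finsum {m : ℕ} {a : Fin m → E N → ℝ} (ha : ∀ i, ContDiff ℝ (⊤ : ℕ∞) (a i))
    (c : Fin m → ℝ) (j : Fin N) (x : E N) :
    pd j (fun y => ∑ i, a i y * c i) x = ∑ i, pd j (a i) x * c i := by
  have h1 : pd j (fun y => ∑ i, a i y * c i) x
      = ∑ i, pd j (fun y => a i y * c i) x := by
    unfold pd
    rw [fderiv_fun_sum fun i _ => (((ha i).differentiable (by simp)) x).mul_const (c i)]
    simp
  rw [h1]
  exact Finset.sum_congr rfl fun i _ => pd_mul_const (ha i) (c i) j x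

/-! ### The Hilbert space and the embedding -/

abbrev Hb (N : ℕ) := PiLp 2 (fun _ : Fin (N+1) => Lp ℝ 2 (muY N))

abbrev LL (N : ℕ) := Lp (Hb N) 2 muT

def gvec (a : E N → ℝ) : Fin (N+1) → E N → ℝ := Fin.cons a (fun i => pd i a)

lemma gvec_continuous {a : E N → ℝ} (ha : ContDiff ℝ (⊤ : ℕ∞) a) (j : Fin (N+1)) :
    Continuous (gvec a j) := by
  induction j using Fin.cases with
  | zero => simpa [gvec] using ha.continuous
  | succ i => simpa [gvec] using pd_continuous ha i

open scoped Classical in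
def iH (a : E N → ℝ) : Hb N :=
  if ha : ContDiff ℝ (⊤ : ℕ∞) a then WithLp.toLp 2 (fun j => (memL2_cell (gvec_continuous ha j)).toLp _) else 0

lemma iH_apply {a : E N → ℝ} (ha : ContDiff ℝ (⊤ : ℕ∞) a) (j : Fin (N+1)) :
    iH a j = (memL2_cell (gvec_continuous ha j)).toLp (gvec a j) := by
  rw [iH, dif_pos ha]

lemma inner_iH_self {a : E N → ℝ} (ha : ContDiff ℝ (⊤ : ℕ∞) a) :
    ⟪iH a, iH a⟫ = ∫ y in cell N, ((a y) ^ 2 + ∑ i, (pd i a y) ^ 2) := by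
  rw [PiLp.inner_apply]
  have h1 : ∀ j : Fin (N+1), ⟪iH a j, iH a j⟫ = ∫ y in cell N, (gvec a j y) ^ 2 := by
    intro j
    rw [iH_apply ha j, MeasureTheory.L2.inner_def]
    refine integral_congr_ae ?_
    filter_upwards [MemLp.coeFn_toLp (memL2_cell (gvec_continuous ha j))] with y hy
    rw [hy, real_inner_self_eq_norm_sq, Real.norm_eq_abs, sq_abs]
  rw [Finset.sum_congr rfl fun j _ => h1 j,
    ← integral_finset_sum _ (f := fun j y => gvec a j y ^ 2) (fun j _ => integrable_cell ((gvec_continuous ha j).pow 2))]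
  refine integral_congr_ae (ae_of_all _ fun y => ?_)
  show (∑ j : Fin (N+1), gvec a j y ^ 2) = a y ^ 2 + ∑ i, pd i a y ^ 2
  rw [← Fin.sum_cons (a y ^ 2) (fun i => pd i a y ^ 2)]
  exact Finset.sum_congr rfl fun j _ => by
    induction j using Fin.cases with
    | zero => simp [gvec]
    | succ i => simp [gvec]

lemma norm_iH {a : E N → ℝ} (ha : ContDiff ℝ (⊤ : ℕ∞) a) : ‖iH a‖ = H1n a := by
  have h2 : ‖iH a‖ = Real.sqrt ⟪iH a, iH a⟫ := by
    rw [real_inner_self_eq_norm_sq, Real.sqrt_sq (norm_nonneg _)]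
  rw [h2, inner_iH_self ha, H1n]

lemma iH_add {a b : E N → ℝ} (ha : ContDiff ℝ (⊤ : ℕ∞) a) (hb : ContDiff ℝ (⊤ : ℕ∞) b) :
    iH (fun y => a y + b y) = iH a + iH b := by
  have hab : ContDiff ℝ (⊤ : ℕ∞) (fun y => a y + b y) := ha.add hb
  ext j : 1
  show iH (fun y => a y + b y) j = iH a j + iH b j
  rw [iH_apply hab j, iH_apply ha j, iH_apply hb j, ← MemLp.toLp_add]
  apply (MemLp.toLp_eq_toLp_iff _ _).mpr
  apply ae_of_all
  intro y
  induction j using Fin.cases with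
  | zero => simp [gvec]
  | succ i => simpa [gvec] using pd_add ha hb i y

lemma iH_smul {a : E N → ℝ} (ha : ContDiff ℝ (⊤ : ℕ∞) a) (r : ℝ) :
    iH (fun y => r * a y) = r • iH a := by
  have hra : ContDiff ℝ (⊤ : ℕ∞) (fun y => r * a y) := contDiff_const.mul ha
  ext j : 1
  show iH (fun y => r * a y) j = r • iH a j
  rw [iH_apply hra j, iH_apply ha j, ← MemLp.toLp_const_smul]
  apply (MemLp.toLp_eq_toLp_iff _ _).mpr
  apply ae_of_all
  intro y
  induction j using Fin.cases with
  | zero => simp [gvec]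
  | succ i => simpa [gvec] using pd_const_mul ha r i y

lemma iH_zero : iH (fun _ : E N => (0:ℝ)) = 0 := by
  have h0 : ContDiff ℝ (⊤ : ℕ∞) (fun _ : E N => (0:ℝ)) := contDiff_const
  ext j : 1
  show iH (fun _ : E N => (0:ℝ)) j = 0
  rw [iH_apply h0 j, ← MemLp.toLp_zero (MemLp.zero (p := 2) (μ := muY N) (ε := ℝ))]
  apply (MemLp.toLp_eq_toLp_iff _ _).mpr
  apply ae_of_all
  intro y
  induction j using Fin.cases with
  | zero => simp [gvec]
  | succ i => simp [gvec, pd, fderiv_fun_const]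

end AuxStuff2

section AuxStuff3

open RealInnerProductSpace ENNReal

set_option synthInstance.maxHeartbeats 1000000
set_option maxHeartbeats 2000000

variable {N : ℕ}

lemma iH_finsum {m : ℕ} (s : Finset (Fin m)) (a : Fin m → E N → ℝ)
    (ha : ∀ i, ContDiff ℝ (⊤ : ℕ∞) (a i)) (c : Fin m → ℝ) :
    iH (fun y => ∑ i ∈ s, a i y * c i) = ∑ i ∈ s, c i • iH (a i) := by
  classical
  induction s using Finset.cons_induction with
  | empty => simpa using iH_zero
  | cons i s hi ih =>
    simp only [Finset.sum_cons]
    have h1 : iH (fun y => a i y * c i + ∑ j ∈ s, a j y * c j)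
        = iH (fun y => a i y * c i) + iH (fun y => ∑ j ∈ s, a j y * c j) :=
      iH_add ((ha i).mul contDiff_const)
        (ContDiff.sum fun j _ => (ha j).mul contDiff_const)
    rw [h1, ih]
    congr 1
    have h2 : (fun y => a i y * c i) = fun y => c i * a i y := by funext y; ring
    rw [h2, iH_smul (ha i) (c i)]

/-! ### The tensor elements of L²(T; H) -/

def sl {m : ℕ} (a : Fin m → E N → ℝ) (b : Fin m → ℝ → ℝ) (τ : ℝ) : E N → ℝ :=
  fun y => ∑ i, a i y * b i τ

lemma sl_contDiff {m : ℕ} {a : Fin m → E N → ℝ} {b : Fin m → ℝ → ℝ}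
    (ha : ∀ i, ContDiff ℝ (⊤ : ℕ∞) (a i)) (τ : ℝ) : ContDiff ℝ (⊤ : ℕ∞) (sl a b τ) :=
  ContDiff.sum fun i _ => (ha i).mul contDiff_const

def fJ {m : ℕ} (a : Fin m → E N → ℝ) (b : Fin m → ℝ → ℝ) : ℝ → Hb N :=
  fun τ => iH (sl a b τ)

lemma fJ_eq {m : ℕ} {a : Fin m → E N → ℝ} {b : Fin m → ℝ → ℝ}
    (ha : ∀ i, ContDiff ℝ (⊤ : ℕ∞) (a i)) (τ : ℝ) :
    fJ a b τ = ∑ i, b i τ • iH (a i) :=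
  iH_finsum Finset.univ a ha (fun i => b i τ)

lemma fJ_continuous {m : ℕ} {a : Fin m → E N → ℝ} {b : Fin m → ℝ → ℝ}
    (ha : ∀ i, ContDiff ℝ (⊤ : ℕ∞) (a i)) (hb : ∀ i, Continuous (b i)) :
    Continuous (fJ a b) := by
  have h : fJ a b = fun τ => ∑ i, b i τ • iH (a i) := funext (fJ_eq ha)
  rw [h]
  exact continuous_finset_sum _ fun i _ => ((hb i).smul continuous_const)

lemma fJ_memL2 {m : ℕ} {a : Fin m → E N → ℝ} {b : Fin m → ℝ → ℝ}
    (ha : ∀ i, ContDiff ℝ (⊤ : ℕ∞) (a i)) (hb : ∀ i, Continuous (b i)) :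
    MemLp (fJ a b) 2 muT :=
  memL2_Ioo (fJ_continuous ha hb)

open scoped Classical in
def JL {m : ℕ} (a : Fin m → E N → ℝ) (b : Fin m → ℝ → ℝ) : LL N :=
  if h : MemLp (fJ a b) 2 muT then h.toLp _ else 0

lemma JL_def {m : ℕ} {a : Fin m → E N → ℝ} {b : Fin m → ℝ → ℝ}
    (ha : ∀ i, ContDiff ℝ (⊤ : ℕ∞) (a i)) (hb : ∀ i, Continuous (b i)) :
    JL a b = (fJ_memL2 ha hb).toLp (fJ a b) := by
  rw [JL, dif_pos (fJ_memL2 ha hb)]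

lemma norm_JL {m : ℕ} {a : Fin m → E N → ℝ} {b : Fin m → ℝ → ℝ}
    (ha : ∀ i, ContDiff ℝ (⊤ : ℕ∞) (a i)) (hb : ∀ i, Continuous (b i)) :
    ‖(JL a b : LL N)‖ = Real.sqrt (∫ τ in Ioo (0:ℝ) 1, (H1n (sl a b τ)) ^ 2) := by
  rw [JL_def ha hb]
  have h2 : ⟪(fJ_memL2 ha hb).toLp (fJ a b), (fJ_memL2 ha hb).toLp (fJ a b)⟫
      = ∫ τ in Ioo (0:ℝ) 1, (H1n (sl a b τ)) ^ 2 := by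
    rw [MeasureTheory.L2.inner_def]
    refine integral_congr_ae ?_
    filter_upwards [MemLp.coeFn_toLp (fJ_memL2 ha hb)] with τ hτ
    rw [hτ, real_inner_self_eq_norm_sq,
      show fJ a b τ = iH (sl a b τ) from rfl, norm_iH (sl_contDiff ha τ)]
  rw [show ‖(fJ_memL2 ha hb).toLp (fJ a b)‖
      = Real.sqrt ⟪(fJ_memL2 ha hb).toLp (fJ a b), (fJ_memL2 ha hb).toLp (fJ a b)⟫ by
    rw [real_inner_self_eq_norm_sq, Real.sqrt_sq (norm_nonneg _)], h2]

lemma append_forall {α : Type*} {k k' : ℕ} {v : Fin k → α} {v' : Fin k' → α} {P : α → Prop}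
    (h : ∀ i, P (v i)) (h' : ∀ i, P (v' i)) : ∀ i, P (Fin.append v v' i) := by
  intro i
  induction i using Fin.addCases with
  | left j => rw [Fin.append_left]; exact h j
  | right j => rw [Fin.append_right]; exact h' j

lemma JL_append {m m' : ℕ} {a : Fin m → E N → ℝ} {b : Fin m → ℝ → ℝ}
    {a' : Fin m' → E N → ℝ} {b' : Fin m' → ℝ → ℝ}
    (ha : ∀ i, ContDiff ℝ (⊤ : ℕ∞) (a i)) (hb : ∀ i, Continuous (b i))
    (ha' : ∀ i, ContDiff ℝ (⊤ : ℕ∞) (a' i)) (hb' : ∀ i, Continuous (b' i)) :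
    JL (Fin.append a a') (Fin.append b b') = JL a b + JL a' b' := by
  have hA : ∀ i, ContDiff ℝ (⊤ : ℕ∞) (Fin.append a a' i) := append_forall ha ha'
  have hB : ∀ i, Continuous (Fin.append b b' i) := append_forall hb hb'
  have key : ∀ τ, fJ (Fin.append a a') (Fin.append b b') τ = fJ a b τ + fJ a' b' τ := by
    intro τ
    rw [fJ_eq hA, fJ_eq ha, fJ_eq ha', Fin.sum_univ_add]
    congr 1
    · exact Finset.sum_congr rfl fun i _ => by rw [Fin.append_left, Fin.append_left]
    · exact Finset.sum_congr rfl fun i _ => by rw [Fin.append_right, Fin.append_right]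
  rw [JL_def hA hB, JL_def ha hb, JL_def ha' hb', ← MemLp.toLp_add]
  apply (MemLp.toLp_eq_toLp_iff _ _).mpr
  exact ae_of_all _ fun τ => key τ

lemma JL_smul {m : ℕ} {a : Fin m → E N → ℝ} {b : Fin m → ℝ → ℝ}
    (ha : ∀ i, ContDiff ℝ (⊤ : ℕ∞) (a i)) (hb : ∀ i, Continuous (b i)) (r : ℝ) :
    JL a (fun i τ => r * b i τ) = r • JL a b := by
  have hb' : ∀ i, Continuous (fun τ => r * b i τ) := fun i => continuous_const.mul (hb i)
  have key : ∀ τ, fJ a (fun i τ => r * b i τ) τ = r • fJ a b τ := by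
    intro τ
    rw [fJ_eq ha, fJ_eq ha, Finset.smul_sum]
    exact Finset.sum_congr rfl fun i _ => by rw [smul_smul]
  rw [JL_def ha hb', JL_def ha hb, ← MemLp.toLp_const_smul]
  apply (MemLp.toLp_eq_toLp_iff _ _).mpr
  exact ae_of_all _ fun τ => key τ

lemma JL_zero_fin0 :
    JL (N := N) (fun _ : Fin 0 => fun _ => (0:ℝ)) (fun _ : Fin 0 => fun _ => (0:ℝ)) = 0 := by
  have ha : ∀ i : Fin 0, ContDiff ℝ (⊤ : ℕ∞) ((fun _ : Fin 0 => fun _ : E N => (0:ℝ)) i) :=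
    fun i => i.elim0
  have hb : ∀ i : Fin 0, Continuous ((fun _ : Fin 0 => fun _ : ℝ => (0:ℝ)) i) :=
    fun i => i.elim0
  rw [JL_def ha hb, ← MemLp.toLp_zero (MemLp.zero (p := 2) (μ := muT) (ε := Hb N))]
  apply (MemLp.toLp_eq_toLp_iff _ _).mpr
  apply ae_of_all
  intro τ
  show fJ _ _ τ = 0
  rw [fJ_eq ha]
  simp

end AuxStuff3

section AuxStuff4

open RealInnerProductSpace ENNReal

set_option synthInstance.maxHeartbeats 1000000
set_option maxHeartbeats 2000000

variable {N : ℕ}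

/-! ### From vanishing a.e. to vanishing everywhere -/

lemma eqOn_zero_of_ae_zero {α X : Type*} [TopologicalSpace α] [MeasurableSpace α]
    [OpensMeasurableSpace α] [NormedAddCommGroup X] {μ : Measure α} [μ.IsOpenPosMeasure]
    {s : Set α} (hs : IsOpen s) {f : α → X} (hf : Continuous f)
    (h : f =ᵐ[μ.restrict s] 0) : ∀ x ∈ s, f x = 0 := by
  intro x hx
  by_contra hfx
  have hopen : IsOpen {z | f z ≠ 0} :=
    (IsClosed.preimage hf isClosed_singleton).isOpen_compl
  have hU : IsOpen (s ∩ {z | f z ≠ 0}) := hs.inter hopen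
  have hne : (s ∩ {z | f z ≠ 0}).Nonempty := ⟨x, hx, hfx⟩
  have hpos := hU.measure_pos μ hne
  have hnull : μ.restrict s {z | f z ≠ 0} = 0 := by
    simpa [Filter.EventuallyEq, ae_iff] using h
  rw [Measure.restrict_apply' hs.measurableSet, Set.inter_comm] at hnull
  exact absurd hnull hpos.ne'

lemma yper_zero (hN : 0 < N) {f : E N → ℝ} (hf : Continuous f) (hp : YPer f)
    (h0 : ∀ y ∈ cell N, f y = 0) (x : E N) : f x = 0 := by
  have hIco : ∀ y : E N, (∀ i, y i ∈ Ico (0:ℝ) 1) → f y = 0 := by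
    intro y hy
    haveI : Nonempty (Fin N) := ⟨⟨0, hN⟩⟩
    set δ : ℝ := (Finset.univ.inf' Finset.univ_nonempty fun i : Fin N => 1 - y i) / 2 with hδ
    have hinfpos : 0 < Finset.univ.inf' Finset.univ_nonempty fun i : Fin N => 1 - y i := by
      rw [Finset.lt_inf'_iff]
      exact fun i _ => by have := (hy i).2; linarith
    have hδpos : 0 < δ := by positivity
    have hδlt : ∀ i, δ < 1 - y i := by
      intro i
      calc δ < Finset.univ.inf' Finset.univ_nonempty fun i : Fin N => 1 - y i := by
            rw [hδ]; exact half_lt_self hinfpos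
        _ ≤ 1 - y i := Finset.inf'_le _ (Finset.mem_univ i)
    set ones : E N := WithLp.toLp 2 (fun _ => (1:ℝ)) with hones
    set z : ℕ → E N := fun n => y + (δ * (1 / (n + 1))) • ones with hz
    have hzcell : ∀ n : ℕ, z n ∈ cell N := by
      intro n i
      have h1 : (0:ℝ) < δ * (1 / (n + 1)) := by positivity
      have h2 : δ * (1 / (n + 1)) ≤ δ := by
        rw [mul_le_iff_le_one_right hδpos]
        rw [div_le_one (by positivity)]
        have : (0:ℝ) ≤ (n:ℝ) := Nat.cast_nonneg n
        linarith
      have hcoord : z n i = y i + (δ * (1 / (n + 1))) * 1 := rfl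
      constructor
      · rw [hcoord]; have := (hy i).1; linarith
      · rw [hcoord]; have := hδlt i; linarith
    have hlim : Filter.Tendsto z Filter.atTop (𝓝 y) := by
      have h1 : Filter.Tendsto (fun n : ℕ => δ * (1 / (n + 1))) Filter.atTop (𝓝 0) := by
        have := tendsto_one_div_add_atTop_nhds_zero_nat (𝕜 := ℝ)
        simpa using this.const_mul δ
      have h2 : Filter.Tendsto (fun n : ℕ => y + (δ * (1 / (n + 1))) • ones)
          Filter.atTop (𝓝 (y + (0:ℝ) • ones)) :=
        ((h1.smul_const ones).const_add y)
      rw [show y + (0:ℝ) • ones = y by simp] at h2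
      exact h2
    have hcl : IsClosed {w : E N | f w = 0} := isClosed_eq hf continuous_const
    exact hcl.mem_of_tendsto hlim (Filter.Eventually.of_forall fun n => h0 _ (hzcell n))
  have key := hp (x - intVec (fun i => ⌊x i⌋)) (fun i => ⌊x i⌋)
  rw [sub_add_cancel] at key
  rw [key]
  apply hIco
  intro i
  have hcoord : (x - intVec (fun i => ⌊x i⌋)) i = x i - (⌊x i⌋ : ℝ) := rfl
  rw [hcoord]
  exact ⟨by linarith [Int.floor_le (x i)], by linarith [Int.lt_floor_add_one (x i)]⟩

lemma tper_zero {f : ℝ → ℝ} (hf : Continuous f) (hp : TPer f)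
    (h0 : ∀ τ ∈ Ioo (0:ℝ) 1, f τ = 0) (τ : ℝ) : f τ = 0 := by
  have hIcc : ∀ σ ∈ Icc (0:ℝ) 1, f σ = 0 := by
    have hcl : IsClosed {w : ℝ | f w = 0} := isClosed_eq hf continuous_const
    have hsub : Ioo (0:ℝ) 1 ⊆ {w : ℝ | f w = 0} := fun σ hσ => h0 σ hσ
    have := closure_minimal hsub hcl
    rw [closure_Ioo (zero_ne_one)] at this
    exact fun σ hσ => this hσ
  have key := hp (Int.fract τ) ⌊τ⌋
  rw [Int.fract_add_floor] at key
  rw [key]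
  exact hIcc _ ⟨Int.fract_nonneg τ, (Int.fract_lt_one τ).le⟩

lemma tfun_zero_of_JL_zero (hN : 0 < N) {m : ℕ} {a : Fin m → E N → ℝ} {b : Fin m → ℝ → ℝ}
    (ha : ∀ i, ContDiff ℝ (⊤ : ℕ∞) (a i) ∧ YPer (a i))
    (hb : ∀ i, ContDiff ℝ (⊤ : ℕ∞) (b i) ∧ TPer (b i))
    (h : JL a b = (0 : LL N)) : ∀ y τ, ∑ i, a i y * b i τ = 0 := by
  have ha1 : ∀ i, ContDiff ℝ (⊤ : ℕ∞) (a i) := fun i => (ha i).1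
  have hb1 : ∀ i, Continuous (b i) := fun i => (hb i).1.continuous
  have h1 : fJ a b =ᵐ[muT] 0 := by
    rw [JL_def ha1 hb1, ← MemLp.toLp_zero (MemLp.zero (p := 2) (μ := muT) (ε := Hb N))] at h
    exact (MemLp.toLp_eq_toLp_iff _ _).mp h
  have h2 : ∀ τ ∈ Ioo (0:ℝ) 1, fJ a b τ = 0 :=
    eqOn_zero_of_ae_zero isOpen_Ioo (fJ_continuous ha1 hb1) h1
  have h3 : ∀ τ ∈ Ioo (0:ℝ) 1, ∀ y, sl a b τ y = 0 := by
    intro τ hτ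
    have hcomp : iH (sl a b τ) (0 : Fin (N+1)) = 0 := by
      rw [show iH (sl a b τ) = (0 : Hb N) from h2 τ hτ]
      rfl
    have h4 : sl a b τ =ᵐ[muY N] 0 := by
      rw [iH_apply (sl_contDiff ha1 τ) 0,
        ← MemLp.toLp_zero (MemLp.zero (p := 2) (μ := muY N) (ε := ℝ))] at hcomp
      have h5 := (MemLp.toLp_eq_toLp_iff _ _).mp hcomp
      have h6 : gvec (sl a b τ) 0 = sl a b τ := rfl
      rwa [h6] at h5
    have hYp : YPer (sl a b τ) := by
      intro z k
      exact Finset.sum_congr rfl fun i _ => by rw [(ha i).2 z k]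
    exact yper_zero hN (sl_contDiff ha1 τ).continuous hYp
      (eqOn_zero_of_ae_zero (cell_isOpen N) (sl_contDiff ha1 τ).continuous h4)
  intro y τ
  have hT : TPer (fun σ => ∑ i, a i y * b i σ) := by
    intro σ k
    exact Finset.sum_congr rfl fun i _ => by rw [(hb i).2 σ k]
  have hC : Continuous (fun σ => ∑ i, a i y * b i σ) :=
    continuous_finset_sum _ fun i _ => continuous_const.mul (hb1 i)
  exact tper_zero hC hT (fun σ hσ => h3 σ hσ y) τ

/-! ### Test functions -/

lemma tfun_smooth {m : ℕ} {a : Fin m → E N → ℝ} {b : Fin m → ℝ → ℝ}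
    (ha : ∀ i, ContDiff ℝ (⊤ : ℕ∞) (a i) ∧ YPer (a i))
    (hb : ∀ i, ContDiff ℝ (⊤ : ℕ∞) (b i) ∧ TPer (b i)) :
    SmoothPerYT (fun y τ => ∑ i, a i y * b i τ) := by
  refine ⟨?_, ?_, ?_⟩
  · exact ContDiff.sum fun i _ => ((ha i).1.comp contDiff_fst).mul ((hb i).1.comp contDiff_snd)
  · intro τ y k
    exact Finset.sum_congr rfl fun i _ => by rw [(ha i).2 y k]
  · intro y τ k
    exact Finset.sum_congr rfl fun i _ => by rw [(hb i).2 τ k]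

/-! ### The subspace of tensor elements and the value of u on it -/

def WSet (N : ℕ) (Ym : Set (E N)) (ρ : E N → ℝ) : Set (LL N) :=
  {F | ∃ (m : ℕ) (a : Fin m → E N → ℝ) (b : Fin m → ℝ → ℝ),
    (∀ i, MemDρ Ym ρ (a i)) ∧ (∀ i, ContDiff ℝ (⊤ : ℕ∞) (b i) ∧ TPer (b i)) ∧ F = JL a b}

open scoped Classical in
def uval {N : ℕ} (Ym : Set (E N)) (ρ : E N → ℝ) (u : (E N → ℝ → ℝ) → ℝ) (F : LL N) : ℝ :=
  if h : F ∈ WSet N Ym ρ then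
    u (fun y τ => ∑ i, h.choose_spec.choose i y * h.choose_spec.choose_spec.choose i τ)
  else 0

lemma uval_spec {N : ℕ} {Ym : Set (E N)} {ρ : E N → ℝ} {u : (E N → ℝ → ℝ) → ℝ} {F : LL N}
    (h : F ∈ WSet N Ym ρ) :
    ∃ (m : ℕ) (a : Fin m → E N → ℝ) (b : Fin m → ℝ → ℝ),
      (∀ i, MemDρ Ym ρ (a i)) ∧ (∀ i, ContDiff ℝ (⊤ : ℕ∞) (b i) ∧ TPer (b i)) ∧ F = JL a b ∧
      uval Ym ρ u F = u (fun y τ => ∑ i, a i y * b i τ) := by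
  refine ⟨h.choose, h.choose_spec.choose, h.choose_spec.choose_spec.choose,
    h.choose_spec.choose_spec.choose_spec.1, h.choose_spec.choose_spec.choose_spec.2.1,
    h.choose_spec.choose_spec.choose_spec.2.2, ?_⟩
  rw [uval, dif_pos h]

end AuxStuff4

open RealInnerProductSpace ENNReal

set_option synthInstance.maxHeartbeats 1000000
set_option maxHeartbeats 4000000

/-- Theorem 3.13: a periodic distribution u which is
continuous on D_ρ(Y_m) ⊗ D_per(𝒯) for the L²_per(𝒯;H¹_ρ(Y_m))-norm belongs to
L²_per(𝒯;(H¹_ρ(Y_m))′), and it is represented by the duality formula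
⟨u,φ⟩ = ∫₀¹ (u(τ), φ(·,τ)) dτ on D_ρ(Y_m) ⊗ D_per(𝒯). -/
theorem periodic_distribution_in_L2_dual
    {N : ℕ} (hN : 3 ≤ N)
    (Ym : Set (E N)) (hYmo : IsOpen Ym) (hYmc : IsConnected Ym) (hYmsub : Ym ⊆ cell N)
    (Λ : ℝ) (hΛ : 0 < Λ)
    (ρ : E N → ℝ) (hρcont : Continuous ρ) (hρper : YPer ρ)
    (hρbd : ∀ y, Λ⁻¹ ≤ ρ y ∧ ρ y ≤ Λ)
    -- u ∈ D′_per(Y×𝒯): a linear functional on smooth periodic test functions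
    (u : (E N → ℝ → ℝ) → ℝ)
    (huadd : ∀ φ ψ : E N → ℝ → ℝ, SmoothPerYT φ → SmoothPerYT ψ →
      u (fun y τ => φ y τ + ψ y τ) = u φ + u ψ)
    (husmul : ∀ (c : ℝ) (φ : E N → ℝ → ℝ), SmoothPerYT φ →
      u (fun y τ => c * φ y τ) = c * u φ)
    -- continuity of u on D_ρ(Y_m) ⊗ D_per(𝒯) for the L²_per(𝒯;H¹_ρ(Y_m))-norm
    (c : ℝ)
    (hcont : ∀ (m : ℕ) (a : Fin m → E N → ℝ) (b : Fin m → ℝ → ℝ),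
      (∀ i, MemDρ Ym ρ (a i)) → (∀ i, ContDiff ℝ (⊤ : ℕ∞) (b i) ∧ TPer (b i)) →
      |u (fun y τ => ∑ i, a i y * b i τ)| ≤
        c * Real.sqrt (∫ τ in Ioo (0:ℝ) 1,
          (H1n (fun y => ∑ i, a i y * b i τ)) ^ 2)) :
    -- u ∈ L²_per(𝒯;(H¹_ρ(Y_m))′) together with the duality representation
    ∃ (U : ℝ → (E N → ℝ) → ℝ) (ν : ℝ → ℝ),
      -- U(τ) is a linear functional on D_ρ(Y_m), bounded by ν(τ) ∈ L²(𝒯)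
      (∀ τ : ℝ, ∀ a a' : E N → ℝ, MemDρ Ym ρ a → MemDρ Ym ρ a' →
        U τ (fun y => a y + a' y) = U τ a + U τ a') ∧
      (∀ (τ r : ℝ) (a : E N → ℝ), MemDρ Ym ρ a →
        U τ (fun y => r * a y) = r * U τ a) ∧
      (∀ (τ : ℝ), ∀ a : E N → ℝ, MemDρ Ym ρ a → |U τ a| ≤ ν τ * H1n a) ∧
      (∀ a : E N → ℝ, MemDρ Ym ρ a → Measurable (fun τ => U τ a)) ∧
      ((∫⁻ τ in Ioo (0:ℝ) 1, ENNReal.ofReal ((ν τ) ^ 2)) < ⊤) ∧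
      -- ⟨u,φ⟩ = ∫₀¹ (u(τ), φ(·,τ)) dτ for φ ∈ D_ρ(Y_m) ⊗ D_per(𝒯)
      (∀ (m : ℕ) (a : Fin m → E N → ℝ) (b : Fin m → ℝ → ℝ),
        (∀ i, MemDρ Ym ρ (a i)) → (∀ i, ContDiff ℝ (⊤ : ℕ∞) (b i) ∧ TPer (b i)) →
        u (fun y τ => ∑ i, a i y * b i τ) =
          ∫ τ in Ioo (0:ℝ) 1, U τ (fun y => ∑ i, a i y * b i τ)) := by
    classical
  have hN0 : 0 < N := by omega
  -- basic facts about u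
  have h0smooth : SmoothPerYT (fun (_ : E N) (_ : ℝ) => (0:ℝ)) :=
    ⟨contDiff_const, fun τ y k => rfl, fun y τ k => rfl⟩
  have hu0 : u (fun _ _ => (0:ℝ)) = 0 := by
    have h := husmul 0 (fun _ _ => (0:ℝ)) h0smooth
    simpa using h
  have u_append : ∀ (m m' : ℕ) (a : Fin m → E N → ℝ) (b : Fin m → ℝ → ℝ)
      (a' : Fin m' → E N → ℝ) (b' : Fin m' → ℝ → ℝ),
      (∀ i, ContDiff ℝ (⊤ : ℕ∞) (a i) ∧ YPer (a i)) → (∀ i, ContDiff ℝ (⊤ : ℕ∞) (b i) ∧ TPer (b i)) →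
      (∀ i, ContDiff ℝ (⊤ : ℕ∞) (a' i) ∧ YPer (a' i)) → (∀ i, ContDiff ℝ (⊤ : ℕ∞) (b' i) ∧ TPer (b' i)) →
      u (fun y τ => ∑ i, Fin.append a a' i y * Fin.append b b' i τ)
        = u (fun y τ => ∑ i, a i y * b i τ) + u (fun y τ => ∑ i, a' i y * b' i τ) := by
    intro m m' a b a' b' ha hb ha' hb'
    have he : (fun y τ => ∑ i, Fin.append a a' i y * Fin.append b b' i τ)
        = (fun (y : E N) (τ : ℝ) => (∑ i, a i y * b i τ) + (∑ i, a' i y * b' i τ)) := by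
      funext y τ
      rw [Fin.sum_univ_add]
      congr 1
      · exact Finset.sum_congr rfl fun i _ => by rw [Fin.append_left, Fin.append_left]
      · exact Finset.sum_congr rfl fun i _ => by rw [Fin.append_right, Fin.append_right]
    rw [he]
    exact huadd _ _ (tfun_smooth ha hb) (tfun_smooth ha' hb')
  have u_smul' : ∀ (m : ℕ) (a : Fin m → E N → ℝ) (b : Fin m → ℝ → ℝ) (r : ℝ),
      (∀ i, ContDiff ℝ (⊤ : ℕ∞) (a i) ∧ YPer (a i)) → (∀ i, ContDiff ℝ (⊤ : ℕ∞) (b i) ∧ TPer (b i)) →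
      u (fun y τ => ∑ i, a i y * (r * b i τ)) = r * u (fun y τ => ∑ i, a i y * b i τ) := by
    intro m a b r ha hb
    have he : (fun y τ => ∑ i, a i y * (r * b i τ))
        = (fun (y : E N) (τ : ℝ) => r * ∑ i, a i y * b i τ) := by
      funext y τ
      rw [Finset.mul_sum]
      exact Finset.sum_congr rfl fun i _ => by ring
    rw [he]
    exact husmul r _ (tfun_smooth ha hb)
  -- well-definedness of the value of u on tensor elements
  have well_def : ∀ (m : ℕ) (a : Fin m → E N → ℝ) (b : Fin m → ℝ → ℝ)
      (m' : ℕ) (a' : Fin m' → E N → ℝ) (b' : Fin m' → ℝ → ℝ),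
      (∀ i, MemDρ Ym ρ (a i)) → (∀ i, ContDiff ℝ (⊤ : ℕ∞) (b i) ∧ TPer (b i)) →
      (∀ i, MemDρ Ym ρ (a' i)) → (∀ i, ContDiff ℝ (⊤ : ℕ∞) (b' i) ∧ TPer (b' i)) →
      JL a b = JL a' b' →
      u (fun y τ => ∑ i, a i y * b i τ) = u (fun y τ => ∑ i, a' i y * b' i τ) := by
    intro m a b m' a' b' hA hb hA' hb' hJL
    have ha : ∀ i, ContDiff ℝ (⊤ : ℕ∞) (a i) ∧ YPer (a i) := fun i => ⟨(hA i).1, (hA i).2.1⟩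
    have ha' : ∀ i, ContDiff ℝ (⊤ : ℕ∞) (a' i) ∧ YPer (a' i) := fun i => ⟨(hA' i).1, (hA' i).2.1⟩
    set nb' : Fin m' → ℝ → ℝ := fun i τ => (-1) * b' i τ with hnb'def
    have hnb : ∀ i, ContDiff ℝ (⊤ : ℕ∞) (nb' i) ∧ TPer (nb' i) := fun i =>
      ⟨contDiff_const.mul (hb' i).1, fun τ k => by
        show (-1) * b' i (τ + k) = (-1) * b' i τ
        rw [(hb' i).2 τ k]⟩
    have hz : JL (Fin.append a a') (Fin.append b nb') = 0 := by
      rw [JL_append (fun i => (ha i).1) (fun i => (hb i).1.continuous)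
        (fun i => (ha' i).1) (fun i => (hnb i).1.continuous),
        JL_smul (fun i => (ha' i).1) (fun i => (hb' i).1.continuous) (-1), hJL]
      simp
    have hzero := tfun_zero_of_JL_zero hN0 (append_forall (P := fun f => ContDiff ℝ (⊤ : ℕ∞) f ∧ YPer f) ha ha') (append_forall (P := fun f => ContDiff ℝ (⊤ : ℕ∞) f ∧ TPer f) hb hnb) hz
    have h1 : u (fun y τ => ∑ i, Fin.append a a' i y * Fin.append b nb' i τ) = 0 := by
      have he : (fun y τ => ∑ i, Fin.append a a' i y * Fin.append b nb' i τ)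
          = (fun (_ : E N) (_ : ℝ) => (0:ℝ)) := by
        funext y τ
        exact hzero y τ
      rw [he, hu0]
    rw [u_append m m' a b a' nb' ha hb ha' hnb,
      u_smul' m' a' b' (-1) ha' hb'] at h1
    linarith
  -- the value of u on tensor elements, as a function of the L² element
  have huval : ∀ (m : ℕ) (a : Fin m → E N → ℝ) (b : Fin m → ℝ → ℝ),
      (∀ i, MemDρ Ym ρ (a i)) → (∀ i, ContDiff ℝ (⊤ : ℕ∞) (b i) ∧ TPer (b i)) →
      uval Ym ρ u (JL a b) = u (fun y τ => ∑ i, a i y * b i τ) := by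
    intro m a b hA hb
    have hmem : JL a b ∈ WSet N Ym ρ := ⟨m, a, b, hA, hb, rfl⟩
    obtain ⟨M, A, B, hAA, hBB, hFe, hval⟩ := uval_spec hmem
    rw [hval]
    exact well_def M A B m a b hAA hBB hA hb hFe.symm
  -- the subspace of tensor elements
  let W : Submodule ℝ (LL N) := {
    carrier := WSet N Ym ρ
    add_mem' := by
      rintro F F' ⟨m, a, b, hA, hb, rfl⟩ ⟨m', a', b', hA', hb', rfl⟩
      exact ⟨m + m', Fin.append a a', Fin.append b b', append_forall hA hA',
        append_forall (P := fun f => ContDiff ℝ (⊤ : ℕ∞) f ∧ TPer f) hb hb',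
        (JL_append (fun i => (hA i).1) (fun i => (hb i).1.continuous)
          (fun i => (hA' i).1) (fun i => (hb' i).1.continuous)).symm⟩
    zero_mem' := ⟨0, fun _ => fun _ => 0, fun _ => fun _ => 0,
      fun i => i.elim0, fun i => i.elim0, JL_zero_fin0.symm⟩
    smul_mem' := by
      rintro r F ⟨m, a, b, hA, hb, rfl⟩
      refine ⟨m, a, fun i τ => r * b i τ, hA, fun i =>
        ⟨contDiff_const.mul (hb i).1, fun τ k => by
          show r * b i (τ + k) = r * b i τ
          rw [(hb i).2 τ k]⟩, ?_⟩
      exact (JL_smul (fun i => (hA i).1) (fun i => (hb i).1.continuous) r).symm }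
  -- the linear functional on W
  let T0 : W →ₗ[ℝ] ℝ := {
    toFun := fun F => uval Ym ρ u F.1
    map_add' := by
      rintro ⟨F, hF⟩ ⟨F', hF'⟩
      obtain ⟨m, a, b, hA, hb, rfl⟩ := hF
      obtain ⟨m', a', b', hA', hb', rfl⟩ := hF'
      show uval Ym ρ u (JL a b + JL a' b') = uval Ym ρ u (JL a b) + uval Ym ρ u (JL a' b')
      rw [← JL_append (fun i => (hA i).1) (fun i => (hb i).1.continuous)
        (fun i => (hA' i).1) (fun i => (hb' i).1.continuous)]
      rw [huval _ _ _ hA hb, huval _ _ _ hA' hb',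
        huval _ _ _ (append_forall hA hA')
          (append_forall (P := fun f => ContDiff ℝ (⊤ : ℕ∞) f ∧ TPer f) hb hb')]
      exact u_append m m' a b a' b' (fun i => ⟨(hA i).1, (hA i).2.1⟩) hb
        (fun i => ⟨(hA' i).1, (hA' i).2.1⟩) hb'
    map_smul' := by
      rintro r ⟨F, hF⟩
      obtain ⟨m, a, b, hA, hb, rfl⟩ := hF
      show uval Ym ρ u (r • JL a b) = r * uval Ym ρ u (JL a b)
      have hbr : ∀ i, ContDiff ℝ (⊤ : ℕ∞) ((fun i τ => r * b i τ) i)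
          ∧ TPer ((fun (i : Fin m) (τ : ℝ) => r * b i τ) i) := fun i =>
        ⟨contDiff_const.mul (hb i).1, fun τ k => by
          show r * b i (τ + k) = r * b i τ
          rw [(hb i).2 τ k]⟩
      rw [← JL_smul (fun i => (hA i).1) (fun i => (hb i).1.continuous) r]
      rw [huval _ _ _ hA hbr, huval _ _ _ hA hb]
      exact u_smul' m a b r (fun i => ⟨(hA i).1, (hA i).2.1⟩) hb }
  -- boundedness
  have hbound : ∀ F : W, ‖T0 F‖ ≤ (max c 0) * ‖(F : LL N)‖ := by
    rintro ⟨F, hF⟩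
    obtain ⟨m, a, b, hA, hb, rfl⟩ := hF
    show ‖uval Ym ρ u (JL a b)‖ ≤ max c 0 * ‖JL a b‖
    rw [huval _ _ _ hA hb, Real.norm_eq_abs]
    have h1 := hcont m a b hA hb
    have h2 : Real.sqrt (∫ τ in Ioo (0:ℝ) 1, (H1n fun y => ∑ i, a i y * b i τ) ^ 2)
        = ‖JL a b‖ :=
      (norm_JL (fun i => (hA i).1) (fun i => (hb i).1.continuous)).symm
    rw [h2] at h1
    calc |u fun y τ => ∑ i, a i y * b i τ| ≤ c * ‖JL a b‖ := h1
      _ ≤ max c 0 * ‖JL a b‖ :=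
        mul_le_mul_of_nonneg_right (le_max_left c 0) (norm_nonneg _)
  let T1 : W →L[ℝ] ℝ := LinearMap.mkContinuous T0 (max c 0) hbound
  -- Hahn-Banach and Riesz representation
  obtain ⟨g, hg, -⟩ := exists_extension_norm_eq W T1
  set G : LL N := (InnerProductSpace.toDual ℝ (LL N)).symm g with hGdef
  refine ⟨fun τ a => ⟪(G : ℝ → Hb N) τ, iH a⟫, fun τ => ‖(G : ℝ → Hb N) τ‖,
    ?_, ?_, ?_, ?_, ?_, ?_⟩
  · -- additivity
    intro τ a a' hMa hMa'
    beta_reduce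
    rw [iH_add hMa.1 hMa'.1, inner_add_right]
  · -- homogeneity
    intro τ r a hMa
    beta_reduce
    rw [iH_smul hMa.1 r, real_inner_smul_right]
  · -- bound
    intro τ a hMa
    beta_reduce
    calc |⟪(G : ℝ → Hb N) τ, iH a⟫| ≤ ‖(G : ℝ → Hb N) τ‖ * ‖iH a‖ :=
        abs_real_inner_le_norm _ _
      _ = ‖(G : ℝ → Hb N) τ‖ * H1n a := by rw [norm_iH hMa.1]
  · -- measurability
    intro a hMa
    exact ((Lp.stronglyMeasurable G).inner stronglyMeasurable_const).measurable
  · -- square integrability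
    have hG2 : MemLp (G : ℝ → Hb N) 2 muT := Lp.memLp G
    have hInt : Integrable (fun τ => ‖(G : ℝ → Hb N) τ‖ ^ ((2:ℝ≥0∞).toReal)) muT :=
      hG2.integrable_norm_rpow (by norm_num) (by norm_num)
    have hfe : (fun τ => ‖(G : ℝ → Hb N) τ‖ ^ ((2:ℝ≥0∞).toReal))
        = fun τ => ‖(G : ℝ → Hb N) τ‖ ^ 2 := by
      funext τ
      rw [ENNReal.toReal_ofNat, Real.rpow_two]
    rw [hfe] at hInt
    have hnn : 0 ≤ᵐ[muT] fun τ => ‖(G : ℝ → Hb N) τ‖ ^ 2 :=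
      ae_of_all _ fun τ => by positivity
    exact (hasFiniteIntegral_iff_ofReal hnn).mp hInt.2
  · -- the duality representation
    intro m a b hA hb
    have hcd : ∀ i, ContDiff ℝ (⊤ : ℕ∞) (a i) := fun i => (hA i).1
    have hbc : ∀ i, Continuous (b i) := fun i => (hb i).1.continuous
    have hmem : JL a b ∈ W := ⟨m, a, b, hA, hb, rfl⟩
    have e1 : u (fun y τ => ∑ i, a i y * b i τ) = uval Ym ρ u (JL a b) :=
      (huval m a b hA hb).symm
    have e2 : uval Ym ρ u (JL a b) = T1 ⟨JL a b, hmem⟩ := rfl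
    have e3 : T1 ⟨JL a b, hmem⟩ = g (JL a b) := (hg ⟨JL a b, hmem⟩).symm
    have e4 : g (JL a b) = ⟪G, JL a b⟫ := by
      rw [hGdef, InnerProductSpace.toDual_symm_apply]
    have e5 : ⟪G, JL a b⟫
        = ∫ τ, ⟪(G : ℝ → Hb N) τ, (JL a b : ℝ → Hb N) τ⟫ ∂muT :=
      MeasureTheory.L2.inner_def _ _
    have e6 : (∫ τ, ⟪(G : ℝ → Hb N) τ, (JL a b : ℝ → Hb N) τ⟫ ∂muT)
        = ∫ τ in Ioo (0:ℝ) 1, ⟪(G : ℝ → Hb N) τ, iH (fun y => ∑ i, a i y * b i τ)⟫ := by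
      refine integral_congr_ae ?_
      have hcoe : (JL a b : ℝ → Hb N) =ᵐ[muT] fJ a b := by
        rw [JL_def hcd hbc]
        exact MemLp.coeFn_toLp _
      filter_upwards [hcoe] with τ hτ
      rw [hτ]
      rfl
    beta_reduce
    rw [e1, e2, e3, e4, e5, e6]
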